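/- Fix k with 1 ≤ k ≤ m, and assume Θ(y_k−x_j) ≠ 0 for every j and Θ(y_k−y_i) ≠ 0 for every i ≠ k, so that φ has a pole of exact order r_k at y_k. Define the accessory parameter H_k = 2r_k [ ∑_{i=1, i≠k}^m r_i·f(y_k−y_i) − ∑_{j=1}^n f(y_k−x_j) − 2πiβ₁ ], where f = Θ′/Θ. Then the function z ↦ φ″(z)/φ(z) − r_k(r_k+1)/(z−y_k)² − H_k/(z−y_k), defined on a punctured neighbourhood of y_k, extends to a function analytic on a full neighbourhood of y_k. That is, the potential u = φ″/φ has a double pole at y_k with quadratic residue r_k(r_k+1) and first-order coefficient H_k. -/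

import Mathlib

/-!
Write `t = z - y k`. Since `Θ` is odd, `Θ w = w · G w` with `G = dslope Θ 0` even and
`G 0 = Θ'(0) ≠ 0`, so `φ = ψ · t^(-r_k)` with `ψ` analytic and nonvanishing at `y k`.
For any such factorisation `φ = ψ · t^q` one has `φ''/φ = ψ''/ψ + 2q (ψ'/ψ)/t + q(q-1)/t²`,
so subtracting `q(q-1)/t² + 2q (ψ'/ψ)(y k)/t` leaves `ψ''/ψ + 2q · dslope (ψ'/ψ) (y k)`,
which is analytic. The value `(ψ'/ψ)(y k)` is the sum of the logarithmic derivatives of the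
factors of `ψ`; the factor `G(t)^(r_k)` contributes nothing because `G'(0) = 0` by evenness.
-/

open Filter Topology Finset

lemma AnalyticAt.dslope {𝕜 E : Type*} [NontriviallyNormedField 𝕜] [NormedAddCommGroup E]
    [NormedSpace 𝕜 E] {f : 𝕜 → E} {a : 𝕜} (hf : AnalyticAt 𝕜 f a) :
    AnalyticAt 𝕜 (dslope f a) a :=
  let ⟨_, hp⟩ := hf
  ⟨_, hp.has_fpower_series_dslope_fslope⟩

lemma AnalyticAt.comp_sub_const {𝕜 E : Type*} [NontriviallyNormedField 𝕜] [NormedAddCommGroup E]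
    [NormedSpace 𝕜 E] {f : 𝕜 → E} {z b : 𝕜} (hf : AnalyticAt 𝕜 f (z - b)) :
    AnalyticAt 𝕜 (fun w => f (w - b)) z := by
  simpa using hf.comp_sub b

section OddFunction

variable {𝕜 : Type*} [NontriviallyNormedField 𝕜] [CharZero 𝕜] {f : 𝕜 → 𝕜}

lemma Function.Odd.mul_dslope_zero (hf : f.Odd) (w : 𝕜) : w * dslope f 0 w = f w := by
  simpa [hf.map_zero] using sub_smul_dslope f 0 w

lemma Function.Odd.even_dslope_zero (hf : f.Odd) : (dslope f 0).Even := by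
  intro w
  rcases eq_or_ne w 0 with rfl | hw
  · rw [neg_zero]
  · rw [dslope_of_ne f hw, dslope_of_ne f (neg_ne_zero.mpr hw), slope_def_field,
      slope_def_field, hf w, hf.map_zero]
    simp only [sub_zero, neg_div_neg_eq]

lemma Function.Even.deriv_zero (hf : f.Even) : deriv f 0 = 0 := by
  have h := deriv_comp_neg f (0 : 𝕜)
  rwa [funext hf, neg_zero, CharZero.eq_neg_self_iff] at h

end OddFunction

lemma HasDerivAt.mul_zpow_sub {u : ℂ → ℂ} {u' a z : ℂ} (hu : HasDerivAt u u' z) (hz : z ≠ a)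
    (q : ℤ) :
    HasDerivAt (fun w => u w * (w - a) ^ q) ((u' + q * u z / (z - a)) * (z - a) ^ q) z := by
  have hza : z - a ≠ 0 := sub_ne_zero.mpr hz
  have hpow : HasDerivAt (fun w => (w - a) ^ q) (q * (z - a) ^ (q - 1)) z := by
    simpa using (hasDerivAt_zpow q (z - a) (.inl hza)).comp_sub_const z a
  refine (hu.mul hpow).congr_deriv ?_
  rw [zpow_sub_one₀ hza]
  field_simp

lemma deriv_deriv_mul_zpow_sub {ψ : ℂ → ℂ} {a z : ℂ} (hψ : AnalyticAt ℂ ψ z) (hz : z ≠ a)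
    (q : ℤ) :
    deriv (deriv fun w => ψ w * (w - a) ^ q) z =
      (deriv (deriv ψ) z + 2 * q * deriv ψ z / (z - a) + q * (q - 1) * ψ z / (z - a) ^ 2) *
        (z - a) ^ q := by
  have hderiv : deriv (fun w => ψ w * (w - a) ^ q) =ᶠ[𝓝 z]
      fun w => (deriv ψ w + q * ψ w / (w - a)) * (w - a) ^ q := by
    filter_upwards [hψ.eventually_analyticAt, eventually_ne_nhds hz] with w hψw hw
    exact (hψw.differentiableAt.hasDerivAt.mul_zpow_sub hw q).deriv
  have hza : z - a ≠ 0 := sub_ne_zero.mpr hz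
  have hu : HasDerivAt (fun w => deriv ψ w + q * ψ w / (w - a))
      (deriv (deriv ψ) z + (q * deriv ψ z * (z - a) - q * ψ z * 1) / (z - a) ^ 2) z :=
    hψ.deriv.differentiableAt.hasDerivAt.add
      ((hψ.differentiableAt.hasDerivAt.const_mul _).div ((hasDerivAt_id z).sub_const a) hza)
  rw [hderiv.deriv_eq, (hu.mul_zpow_sub hz q).deriv]
  field_simp
  ring

theorem exists_analyticAt_eq_potential_sub_singularPart {φ ψ : ℂ → ℂ} {a : ℂ} {q : ℤ}
    (hψ : AnalyticAt ℂ ψ a) (hψa : ψ a ≠ 0) (hφ : φ =ᶠ[𝓝[≠] a] fun z => ψ z * (z - a) ^ q) :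
    ∃ g : ℂ → ℂ, AnalyticAt ℂ g a ∧ ∀ᶠ z in 𝓝[≠] a,
      g z = iteratedDeriv 2 φ z / φ z - q * (q - 1) / (z - a) ^ 2
        - 2 * q * logDeriv ψ a / (z - a) := by
  have hlog : AnalyticAt ℂ (logDeriv ψ) a := hψ.deriv.div hψ hψa
  refine ⟨fun z => deriv (deriv ψ) z / ψ z + 2 * q * dslope (logDeriv ψ) a z,
    (hψ.deriv.deriv.div hψ hψa).add (analyticAt_const.mul hlog.dslope), ?_⟩
  filter_upwards [hφ, hφ.nhdsNE_deriv.nhdsNE_deriv,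
    nhdsWithin_le_nhds (hψ.eventually_analyticAt.and (hψ.continuousAt.eventually_ne hψa)),
    self_mem_nhdsWithin] with z hφz hφ'' ⟨hψz, hψz0⟩ hz
  have hza : z - a ≠ 0 := sub_ne_zero.mpr hz
  rw [iteratedDeriv_succ, iteratedDeriv_one, hφ'', deriv_deriv_mul_zpow_sub hψz hz, hφz,
    dslope_of_ne _ hz, slope_def_field, logDeriv_apply, logDeriv_apply]
  field_simp
  ring

section LogDeriv

variable {𝕜 : Type*} [NontriviallyNormedField 𝕜] {f : 𝕜 → 𝕜} {z : 𝕜}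

lemma logDeriv_comp_sub_const (b : 𝕜) : logDeriv (fun w => f (w - b)) z = logDeriv f (z - b) := by
  simp only [logDeriv_apply, deriv_comp_sub_const]

lemma logDeriv_prod_pow_comp_sub_const {ι : Type*} {s : Finset ι} {x : ι → 𝕜} (e : ι → ℕ)
    (hd : ∀ i ∈ s, DifferentiableAt 𝕜 f (z - x i)) (h0 : ∀ i ∈ s, f (z - x i) ≠ 0) :
    logDeriv (fun w => ∏ i ∈ s, f (w - x i) ^ e i) z = ∑ i ∈ s, e i * logDeriv f (z - x i) := by
  have hdi : ∀ i ∈ s, DifferentiableAt 𝕜 (fun w => f (w - x i)) z := fun i hi =>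
    (hd i hi).hasDerivAt.comp_sub_const z (x i) |>.differentiableAt
  rw [logDeriv_prod (f := fun i w => f (w - x i) ^ e i) (fun i hi => pow_ne_zero _ (h0 i hi))
    fun i hi => (hdi i hi).fun_pow _]
  refine sum_congr rfl fun i hi => ?_
  rw [logDeriv_fun_pow (hdi i hi), logDeriv_comp_sub_const]

end LogDeriv

lemma logDeriv_cexp_const_mul (c z : ℂ) : logDeriv (fun w => Complex.exp (c * w)) z = c := by
  rw [logDeriv_apply, ((hasDerivAt_id' z).const_mul c).cexp.deriv]
  field_simp [Complex.exp_ne_zero]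

noncomputable def regularFactor {ι κ : Type*} [Fintype ι] [Fintype κ] [DecidableEq κ]
    (Θ : ℂ → ℂ) (c : ℂ) (x : ι → ℂ) (y : κ → ℂ) (r : κ → ℕ) (k : κ) (z : ℂ) : ℂ :=
  Complex.exp (c * z) * (∏ j, Θ (z - x j)) /
    ((∏ i ∈ univ.erase k, Θ (z - y i) ^ r i) * dslope Θ 0 (z - y k) ^ r k)

section RegularFactor

variable {ι κ : Type*} [Fintype ι] [Fintype κ] [DecidableEq κ] {Θ : ℂ → ℂ} {c : ℂ}
  {x : ι → ℂ} {y : κ → ℂ} {r : κ → ℕ} {k : κ}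

lemma regularFactor_mul_zpow (hodd : Θ.Odd) (z : ℂ) :
    regularFactor Θ c x y r k z * (z - y k) ^ (-(r k : ℤ)) =
      Complex.exp (c * z) * (∏ j, Θ (z - x j)) / ∏ i, Θ (z - y i) ^ r i := by
  rw [← mul_prod_erase univ _ (mem_univ k), ← hodd.mul_dslope_zero, zpow_neg, zpow_natCast,
    regularFactor]
  generalize z - y k = t
  ring

lemma prod_erase_mul_dslope_pow_ne_zero (hΘ' : deriv Θ 0 ≠ 0) (hyy : ∀ i ∈ univ.erase k, Θ (y k - y i) ≠ 0) :
    (∏ i ∈ univ.erase k, Θ (y k - y i) ^ r i) * dslope Θ 0 (y k - y k) ^ r k ≠ 0 := by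
  rw [sub_self, dslope_same]
  exact mul_ne_zero (prod_ne_zero_iff.mpr fun i hi => pow_ne_zero _ (hyy i hi)) (pow_ne_zero _ hΘ')

lemma analyticAt_regularFactor (hΘ : ∀ z, AnalyticAt ℂ Θ z) (hΘ' : deriv Θ 0 ≠ 0)
    (hyy : ∀ i ∈ univ.erase k, Θ (y k - y i) ≠ 0) :
    AnalyticAt ℂ (regularFactor Θ c x y r k) (y k) := by
  have hG : AnalyticAt ℂ (dslope Θ 0) (y k - y k) := by rw [sub_self]; exact (hΘ 0).dslope
  have hT : ∀ b, AnalyticAt ℂ (fun w => Θ (w - b)) (y k) := fun b => (hΘ _).comp_sub_const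
  unfold regularFactor
  fun_prop (disch := exact prod_erase_mul_dslope_pow_ne_zero hΘ' hyy)

lemma regularFactor_ne_zero (hΘ' : deriv Θ 0 ≠ 0) (hyx : ∀ j, Θ (y k - x j) ≠ 0)
    (hyy : ∀ i ∈ univ.erase k, Θ (y k - y i) ≠ 0) :
    regularFactor Θ c x y r k (y k) ≠ 0 :=
  div_ne_zero (mul_ne_zero (Complex.exp_ne_zero _) (prod_ne_zero_iff.mpr fun j _ => hyx j))
    (prod_erase_mul_dslope_pow_ne_zero hΘ' hyy)

lemma logDeriv_regularFactor (hΘ : ∀ z, AnalyticAt ℂ Θ z) (hodd : Θ.Odd) (hΘ' : deriv Θ 0 ≠ 0)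
    (hyx : ∀ j, Θ (y k - x j) ≠ 0) (hyy : ∀ i ∈ univ.erase k, Θ (y k - y i) ≠ 0) :
    logDeriv (regularFactor Θ c x y r k) (y k) =
      c + ∑ j, logDeriv Θ (y k - x j) - ∑ i ∈ univ.erase k, r i * logDeriv Θ (y k - y i) := by
  have hd : Differentiable ℂ Θ := fun b => (hΘ b).differentiableAt
  have hG : DifferentiableAt ℂ (dslope Θ 0) (y k - y k) := by
    rw [sub_self]; exact (hΘ 0).dslope.differentiableAt
  have hlogG : logDeriv (fun w => dslope Θ 0 (w - y k) ^ r k) (y k) = 0 := by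
    rw [logDeriv_fun_pow (by fun_prop), logDeriv_comp_sub_const, sub_self, logDeriv_apply,
      hodd.even_dslope_zero.deriv_zero, zero_div, mul_zero]
  have hX := logDeriv_prod_pow_comp_sub_const (s := univ) 1 (fun j _ => hd _) fun j _ => hyx j
  simp only [Pi.one_apply, pow_one, Nat.cast_one, one_mul] at hX
  have hY := logDeriv_prod_pow_comp_sub_const r (fun i _ => hd _) hyy
  have hP : ∏ j, Θ (y k - x j) ≠ 0 := prod_ne_zero_iff.mpr fun j _ => hyx j
  obtain ⟨hQ, hGk⟩ := mul_ne_zero_iff.mp (prod_erase_mul_dslope_pow_ne_zero (r := r) hΘ' hyy)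
  have hE : Complex.exp (c * y k) ≠ 0 := Complex.exp_ne_zero _
  unfold regularFactor
  rw [logDeriv_div, logDeriv_mul, logDeriv_mul, logDeriv_cexp_const_mul, hX, hY, hlogG, add_zero]
  all_goals first | fun_prop | assumption | exact mul_ne_zero hE hP | exact mul_ne_zero hQ hGk

end RegularFactor

theorem stmt_16_general (n m : ℕ)
    (Θ : ℂ → ℂ) (hΘ : ∀ z : ℂ, AnalyticAt ℂ Θ z)
    (hodd : ∀ z : ℂ, Θ (-z) = -Θ z) (hΘ' : deriv Θ 0 ≠ 0)
    (x : Fin n → ℂ) (y : Fin m → ℂ) (r : Fin m → ℕ)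
    (β₁ : ℤ)
    (φ : ℂ → ℂ)
    (hφ : φ = fun z => Complex.exp (2 * (Real.pi : ℂ) * Complex.I * (β₁ : ℂ) * z)
      * (∏ j, Θ (z - x j)) / ∏ i, Θ (z - y i) ^ r i)
    (k : Fin m)
    (hyx : ∀ j, Θ (y k - x j) ≠ 0)
    (hyy : ∀ i ∈ Finset.univ.erase k, Θ (y k - y i) ≠ 0) :
    ∃ g : ℂ → ℂ, AnalyticAt ℂ g (y k) ∧
      ∀ᶠ z in 𝓝[≠] (y k),
        g z = iteratedDeriv 2 φ z / φ z
          - (r k : ℂ) * ((r k : ℂ) + 1) / (z - y k) ^ 2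
          - (2 * (r k : ℂ) *
              ((∑ i ∈ Finset.univ.erase k,
                  (r i : ℂ) * (deriv Θ (y k - y i) / Θ (y k - y i)))
                - (∑ j, deriv Θ (y k - x j) / Θ (y k - x j))
                - 2 * (Real.pi : ℂ) * Complex.I * (β₁ : ℂ))) / (z - y k) := by
  have hfactor : φ =ᶠ[𝓝[≠] y k] fun z =>
      regularFactor Θ (2 * Real.pi * Complex.I * β₁) x y r k z * (z - y k) ^ (-(r k : ℤ)) :=
    .of_forall fun z => by rw [hφ]; exact (regularFactor_mul_zpow hodd z).symm
  obtain ⟨g, hg, hgφ⟩ := exists_analyticAt_eq_potential_sub_singularPart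
    (analyticAt_regularFactor hΘ hΘ' hyy) (regularFactor_ne_zero hΘ' hyx hyy) hfactor
  refine ⟨g, hg, hgφ.mono fun z hz => ?_⟩
  rw [hz, logDeriv_regularFactor hΘ hodd hΘ' hyx hyy]
  simp only [logDeriv_apply]
  push_cast
  ring

/-- For `φ(z) = e^{2πiβ₁z}∏ⱼΘ(z-xⱼ)/∏ᵢΘ(z-yᵢ)^{rᵢ}` with `Θ` entire, odd, `Θ'(0) ≠ 0`,
the potential `u = φ''/φ` has a double pole at `y_k` with quadratic residue `r_k(r_k+1)`
and first-order coefficient `H_k = 2r_k[∑_{i≠k} rᵢ f(y_k-yᵢ) - ∑ⱼ f(y_k-xⱼ) - 2πiβ₁]`,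
`f = Θ'/Θ`: subtracting this singular part yields an analytic extension across `y_k`. -/
theorem stmt_16 (n m : ℕ) (hn : 0 < n) (hm : 0 < m)
    (Θ : ℂ → ℂ) (hΘ : ∀ z : ℂ, AnalyticAt ℂ Θ z)
    (hodd : ∀ z : ℂ, Θ (-z) = -Θ z) (hΘ' : deriv Θ 0 ≠ 0)
    (x : Fin n → ℂ) (y : Fin m → ℂ) (r : Fin m → ℕ) (hr : ∀ i, 0 < r i)
    (β₁ : ℤ)
    (φ : ℂ → ℂ)
    (hφ : φ = fun z => Complex.exp (2 * (Real.pi : ℂ) * Complex.I * (β₁ : ℂ) * z)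
      * (∏ j, Θ (z - x j)) / ∏ i, Θ (z - y i) ^ r i)
    (k : Fin m)
    (hyx : ∀ j, Θ (y k - x j) ≠ 0)
    (hyy : ∀ i ∈ Finset.univ.erase k, Θ (y k - y i) ≠ 0) :
    ∃ g : ℂ → ℂ, AnalyticAt ℂ g (y k) ∧
      ∀ᶠ z in 𝓝[≠] (y k),
        g z = iteratedDeriv 2 φ z / φ z
          - (r k : ℂ) * ((r k : ℂ) + 1) / (z - y k) ^ 2
          - (2 * (r k : ℂ) *
              ((∑ i ∈ Finset.univ.erase k,
                  (r i : ℂ) * (deriv Θ (y k - y i) / Θ (y k - y i)))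
                - (∑ j, deriv Θ (y k - x j) / Θ (y k - x j))
                - 2 * (Real.pi : ℂ) * Complex.I * (β₁ : ℂ))) / (z - y k) :=
  stmt_16_general n m Θ hΘ hodd hΘ' x y r β₁ φ hφ k hyx hyy
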